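/- Let $y^- = (y_1^-, \dots, y_m^-)$ be a subsequence of the sequence of distinct reals $y^+ = (y_1^+, \dots, y_n^+)$. If $(y^+_{i_1}, \dots, y^+_{i_\ell})$ is a chain in $\mathrm{BST}(y^+)$ (listed in order of insertion), then for any triple of indices $k < i_j < i_{j'}$ with $i_j, i_{j'} \in \{i_1,\dots,i_\ell\}$, one has $(y_{i_j}^+ - y_k^+)(y_{i_{j'}}^+ - y_k^+) > 0$; and conversely this condition on all such triples implies that the values form a chain. -/

import Mathlib

/-- Binary trees with real labels. -/
inductive BTree where
  | leaf : BTree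
  | node : BTree → ℝ → BTree → BTree

namespace BTree

/-- Insertion of a value into a binary search tree. -/
noncomputable def insert (x : ℝ) : BTree → BTree
  | leaf => node leaf x leaf
  | node l y r => if x < y then node (insert x l) y r else node l y (insert x r)

/-- Number of nodes. -/
def size : BTree → ℕ
  | leaf => 0
  | node l _ r => size l + 1 + size r

/-- Number of nodes on a longest root-to-leaf path. -/
def depth : BTree → ℕ
  | leaf => 0
  | node l _ r => 1 + max (depth l) (depth r)

/-- Height: maximal number of edges from the root to a leaf (`-1` for the empty tree). -/
def height (t : BTree) : ℤ := (depth t : ℤ) - 1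

/-- The value `x` is a label of the tree. -/
def Mem (x : ℝ) : BTree → Prop
  | leaf => False
  | node l y r => x = y ∨ Mem x l ∨ Mem x r

/-- The node labeled `a` is a (strict) ancestor of the node labeled `b`. -/
def IsAncestor (a b : ℝ) : BTree → Prop
  | leaf => False
  | node l y r => (a = y ∧ (Mem b l ∨ Mem b r)) ∨ IsAncestor a b l ∨ IsAncestor a b r

/-- A set of labels is a chain if any two of its nodes are comparable for the
ancestor relation. -/
def IsChain (t : BTree) (C : Set ℝ) : Prop :=
  ∀ a ∈ C, ∀ b ∈ C, a = b ∨ IsAncestor a b t ∨ IsAncestor b a t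

end BTree

/-- The binary search tree obtained by inserting the elements of a list in order. -/
noncomputable def bstOfList (l : List ℝ) : BTree := l.foldl (fun t x => t.insert x) .leaf

/-- The BST of a list of planar points, already sorted by increasing `x`-coordinate:
insert the `y`-coordinates in order. -/
noncomputable def bstOfSortedPts (l : List (ℝ × ℝ)) : BTree := bstOfList (l.map Prod.snd)

open scoped Classical in
/-- The BST of a finite set of planar points, given as a list: sort the points by
increasing `x`-coordinate and insert the `y`-coordinates in this order. -/
noncomputable def bstOfPts (l : List (ℝ × ℝ)) : BTree :=
  bstOfSortedPts (l.mergeSort (fun p q => decide (p.1 ≤ q.1)))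

open scoped Classical in
/-- Length of a longest increasing subsequence of `f`. -/
noncomputable def lisLen {n : ℕ} {β : Type*} [Preorder β] (f : Fin n → β) : ℕ :=
  Finset.univ.sup fun s : Finset (Fin n) => if StrictMonoOn f ↑s then s.card else 0

open scoped Classical in
/-- Length of a longest decreasing subsequence of `f`. -/
noncomputable def ldsLen {n : ℕ} {β : Type*} [Preorder β] (f : Fin n → β) : ℕ :=
  Finset.univ.sup fun s : Finset (Fin n) => if StrictAntiOn f ↑s then s.card else 0

/-! In `BST(l)` the node `a` is an ancestor of `b` exactly when `a` is the first value of `l`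
lying in the closed interval `[[a, b]]`: the first value `c` of `l` becomes the root and the
remaining values are split into the subtrees `< c` and `≥ c`, and `a`, `b` stay in the same
subtree precisely when `c` is not between them. For `l = [y 0, …, y (n-1)]` this says that
`y i` is an ancestor of `y j` iff `i < j` and no `y k` with `k < i` lies in `[[y i, y j]]`, that
is, `(y i - y k) * (y j - y k) > 0`. -/

theorem Set.mem_uIcc_iff_mul_sub_nonpos {R : Type*} [Ring R] [LinearOrder R] [IsStrictOrderedRing R]
    {a b x : R} : x ∈ Set.uIcc a b ↔ (a - x) * (b - x) ≤ 0 := by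
  rw [Set.mem_uIcc, mul_nonpos_iff, sub_nonneg, sub_nonpos, sub_nonneg, sub_nonpos]
  tauto

namespace BTree

theorem mem_insert {x a : ℝ} {t : BTree} : (t.insert a).Mem x ↔ x = a ∨ t.Mem x := by
  induction t with
  | leaf => simp [insert, Mem]
  | node l y r ihl ihr =>
    simp only [insert]
    split <;> simp only [Mem, ihl, ihr] <;> tauto

theorem mem_foldl_insert {x : ℝ} {t : BTree} {l : List ℝ} :
    (l.foldl (fun t x => t.insert x) t).Mem x ↔ t.Mem x ∨ x ∈ l := by
  induction l generalizing t with
  | nil => simp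
  | cons c l ih => simp only [List.foldl_cons, ih, mem_insert, List.mem_cons]; tauto

theorem IsAncestor.mem {a b : ℝ} {t : BTree} (h : t.IsAncestor a b) : t.Mem a ∧ t.Mem b := by
  induction t with
  | leaf => exact h.elim
  | node l y r ihl ihr =>
    rcases h with ⟨rfl, h⟩ | h | h
    · exact ⟨Or.inl rfl, Or.inr h⟩
    · exact ⟨Or.inr (Or.inl (ihl h).1), Or.inr (Or.inl (ihl h).2)⟩
    · exact ⟨Or.inr (Or.inr (ihr h).1), Or.inr (Or.inr (ihr h).2)⟩

theorem isAncestor_node_of_ne {L R : BTree} {a b c : ℝ} (hac : a ≠ c) :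
    (node L c R).IsAncestor a b ↔ L.IsAncestor a b ∨ R.IsAncestor a b := by
  simp [IsAncestor, hac]

theorem foldl_insert_node (L : BTree) (c : ℝ) (R : BTree) (l : List ℝ) :
    l.foldl (fun t x => t.insert x) (node L c R) =
      node ((l.filter (· < c)).foldl (fun t x => t.insert x) L) c
        ((l.filter (c ≤ ·)).foldl (fun t x => t.insert x) R) := by
  induction l generalizing L R with
  | nil => rfl
  | cons x l ih =>
    by_cases h : x < c
    · simp [insert, h, ih]
    · simp [insert, h, not_lt.1 h, ih]

end BTree

open BTree

theorem mem_bstOfList {x : ℝ} {l : List ℝ} : (bstOfList l).Mem x ↔ x ∈ l := by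
  simp [bstOfList, mem_foldl_insert, Mem]

theorem bstOfList_cons (c : ℝ) (l : List ℝ) :
    bstOfList (c :: l) =
      node (bstOfList (l.filter (· < c))) c (bstOfList (l.filter (c ≤ ·))) :=
  foldl_insert_node .leaf c .leaf l

theorem List.find?_filter_of_imp {α : Type*} {p q : α → Bool} {l : List α}
    (h : ∀ x, q x → p x) : (l.filter p).find? q = l.find? q := by
  rw [List.find?_filter]
  congr with x
  by_cases hq : q x <;> simp [hq, h x]

open scoped Classical in
theorem isAncestor_bstOfList_iff :
    ∀ {l : List ℝ}, l.Nodup → ∀ {a b : ℝ}, a ≠ b →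
      ((bstOfList l).IsAncestor a b ↔ b ∈ l ∧ l.find? (· ∈ Set.uIcc a b) = some a)
  | [], _, a, b, _ => by simp [bstOfList, IsAncestor]
  | c :: l, hl, a, b, hab => by
    obtain ⟨hcl, hl⟩ := List.nodup_cons.1 hl
    have mem_left (x : ℝ) : (bstOfList (l.filter (· < c))).Mem x ↔ x ∈ l ∧ x < c := by
      simp [mem_bstOfList]
    have mem_right (x : ℝ) : (bstOfList (l.filter (c ≤ ·))).Mem x ↔ x ∈ l ∧ c ≤ x := by
      simp [mem_bstOfList]
    rw [bstOfList_cons]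
    by_cases hc : c ∈ Set.uIcc a b
    · rw [List.find?_cons_of_pos (by simpa using hc), Option.some_inj]
      rw [Set.mem_uIcc] at hc
      by_cases hac : a = c
      · subst hac
        have not_in (t : BTree) (ht : t.Mem a → a ∈ l) : ¬ t.IsAncestor a b :=
          fun h => hcl (ht h.mem.1)
        simp only [IsAncestor, mem_left, mem_right, true_and, List.mem_cons, hab.symm, false_or,
          not_in _ (fun h => ((mem_left a).1 h).1), not_in _ (fun h => ((mem_right a).1 h).1),
          or_false, and_true]
        rw [← and_or_left, and_iff_left (lt_or_ge b a)]
      · rw [isAncestor_node_of_ne hac, iff_false_intro (Ne.symm hac), and_false, iff_false]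
        rintro (h | h)
        · have := (mem_left a).1 h.mem.1
          have := (mem_left b).1 h.mem.2
          grind
        · have := (mem_right a).1 h.mem.1
          have hb := (mem_right b).1 h.mem.2
          have : b ≠ c := by rintro rfl; exact hcl hb.1
          grind
    · rw [List.find?_cons_of_neg (by simpa using hc)]
      have hac : a ≠ c := by rintro rfl; exact hc Set.left_mem_uIcc
      have hbc : b ≠ c := by rintro rfl; exact hc Set.right_mem_uIcc
      rw [isAncestor_node_of_ne hac, List.mem_cons, or_iff_right hbc]
      have side (p : ℝ → Bool) (hb : p b) (hp : ∀ x ∈ Set.uIcc a b, p x) :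
          (bstOfList (l.filter p)).IsAncestor a b ↔
            b ∈ l ∧ l.find? (· ∈ Set.uIcc a b) = some a := by
        rw [isAncestor_bstOfList_iff (hl.filter p) hab, List.mem_filter,
          List.find?_filter_of_imp (by simpa using hp)]
        simp [hb]
      rw [Set.mem_uIcc] at hc
      rcases (by grind : (a < c ∧ b < c) ∨ (c < a ∧ c < b)) with ⟨ha, hb⟩ | ⟨ha, hb⟩
      · rw [or_iff_left fun h => ((mem_right a).1 h.mem.1).2.not_gt ha]
        refine side _ (by simpa using hb) fun x hx => ?_
        rw [Set.mem_uIcc] at hx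
        grind
      · rw [or_iff_right fun h => ((mem_left a).1 h.mem.1).2.not_gt ha]
        refine side _ (by simpa using hb.le) fun x hx => ?_
        rw [Set.mem_uIcc] at hx
        grind
termination_by l => l.length
decreasing_by exact Nat.lt_succ_of_le (List.length_filter_le _ _)

theorem isAncestor_bstOfList_ofFn_iff {n : ℕ} {y : Fin n → ℝ} (hy : Function.Injective y)
    {i j : Fin n} (hij : i ≠ j) :
    (bstOfList (List.ofFn y)).IsAncestor (y i) (y j) ↔
      i < j ∧ ∀ k < i, y k ∉ Set.uIcc (y i) (y j) := by
  rw [isAncestor_bstOfList_iff (List.nodup_ofFn.2 hy) (hy.ne hij),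
    List.find?_ofFn_eq_some_of_injective hy]
  simp only [List.mem_ofFn, exists_apply_eq_apply, true_and, decide_eq_true_eq,
    Set.left_mem_uIcc]
  exact ⟨fun h => ⟨(lt_or_gt_of_ne hij).resolve_right fun hji => h j hji Set.right_mem_uIcc, h⟩,
    And.right⟩

/-- **Characterization of chains of a BST.** For distinct reals `y 0, …, y (n-1)`
inserted in order, a set of indices `I` labels a chain of `BST(y)` if and only if for
every triple `k < i < j` with `i, j ∈ I`, the value `y k` does not lie strictly between
`y i` and `y j`, i.e. `(y i - y k) * (y j - y k) > 0`. -/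
theorem stmt17 {n : ℕ} (y : Fin n → ℝ) (hy : Function.Injective y) (I : Finset (Fin n)) :
    BTree.IsChain (bstOfList (List.ofFn y)) (y '' (I : Set (Fin n))) ↔
      ∀ k i j : Fin n, i ∈ I → j ∈ I → k < i → i < j →
        0 < (y i - y k) * (y j - y k) := by
  have anc {i j : Fin n} (hij : i ≠ j) :
      (bstOfList (List.ofFn y)).IsAncestor (y i) (y j) ↔
        i < j ∧ ∀ k < i, 0 < (y i - y k) * (y j - y k) := by
    simp only [isAncestor_bstOfList_ofFn_iff hy hij, Set.mem_uIcc_iff_mul_sub_nonpos, not_le]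
  constructor
  · intro hchain k i j hi hj hki hij
    rcases hchain (y i) ⟨i, hi, rfl⟩ (y j) ⟨j, hj, rfl⟩ with h | h | h
    · exact absurd (hy h) hij.ne
    · exact ((anc hij.ne).1 h).2 k hki
    · exact absurd ((anc hij.ne').1 h).1 hij.not_gt
  · rintro H _ ⟨i, hi, rfl⟩ _ ⟨j, hj, rfl⟩
    rcases lt_trichotomy i j with hij | rfl | hij
    · exact Or.inr (Or.inl ((anc hij.ne).2 ⟨hij, fun k hk => H k i j hi hj hk hij⟩))
    · exact Or.inl rfl
    · exact Or.inr (Or.inr ((anc hij.ne).2 ⟨hij, fun k hk => H k j i hj hi hk hij⟩))
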